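/- The F-algebra homomorphism F[A,B,C,X,Y,Z] → F[x,y,z] determined by A ↦ xz, B ↦ xz², C ↦ x, X ↦ yz, Y ↦ yz², Z ↦ y has kernel exactly the ideal 𝒮̄-ideal ℐ̄, and hence induces an F-algebra isomorphism from 𝒮 = F[A,B,C,X,Y,Z]/ℐ̄ onto the F-subalgebra of F[x,y,z] generated by the six monomials x, xz, xz², y, yz, yz². -/

import Mathlib

/-!
The six quadrics generating `ℐ̄`, together with `CY - BZ = (AX - BZ) - (AX - CY)`, rewrite
`AX → BZ`, `A² → BC`, `X² → YZ`, `AY → BX`, `AZ → CX`, `CY → BZ`, and each rewrite lowers the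
weight `2·deg_A + deg_X + deg_Y`. Hence every polynomial is congruent modulo `ℐ̄` to a combination
of standard monomials, those divisible by none of `AX, A², X², AY, AZ, CY`. The parametrization
sends monomials to monomials, and on standard monomials the exponent map
`m ↦ (m_A + m_B + m_C, m_X + m_Y + m_Z, m_A + 2m_B + m_X + 2m_Y)` is injective, so no nonzero
combination of standard monomials lies in the kernel. Since `ℐ̄` is contained in the kernel,
the modular law gives equality; the rest is the first isomorphism theorem.
-/

open MvPolynomial

/-- The images of the six variables `A, B, C, X, Y, Z` (indexed `0,…,5`) under the map
`A ↦ xz, B ↦ xz², C ↦ x, X ↦ yz, Y ↦ yz², Z ↦ y` (with `x, y, z` the variables `0, 1, 2`). -/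
noncomputable def toricImages (F : Type*) [CommRing F] : Fin 6 → MvPolynomial (Fin 3) F :=
  ![X 0 * X 2, X 0 * X 2 ^ 2, X 0, X 1 * X 2, X 1 * X 2 ^ 2, X 1]

/-- The ideal `ℐ̄` generated by the 2×2 minors of the matrix with rows `(A, B, X, Y)` and
`(C, A, Z, X)`, where `A,B,C,X,Y,Z` are the variables `0,…,5`. -/
noncomputable def minorsIdeal (F : Type*) [CommRing F] : Ideal (MvPolynomial (Fin 6) F) :=
  Ideal.span
    {X 0 ^ 2 - X 1 * X 2, X 0 * X 5 - X 2 * X 3, X 0 * X 3 - X 2 * X 4,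
     X 0 * X 3 - X 1 * X 5, X 0 * X 4 - X 1 * X 3, X 3 ^ 2 - X 4 * X 5}

open Finsupp (single)

theorem MvPolynomial.monomial_add_sub_monomial_add_mem {σ R : Type*} [CommRing R]
    {I : Ideal (MvPolynomial σ R)} {i j k l : σ} (h : X i * X j - X k * X l ∈ I)
    (n : σ →₀ ℕ) :
    monomial (single i 1 + single j 1 + n) (1 : R) - monomial (single k 1 + single l 1 + n) 1
      ∈ I := by
  have : monomial (single i 1 + single j 1 + n) (1 : R) -
      monomial (single k 1 + single l 1 + n) 1 = (X i * X j - X k * X l) * monomial n 1 := by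
    simp only [X, monomial_mul, sub_mul, mul_one]
  exact this ▸ I.mul_mem_right _ h

theorem Finsupp.single_add_single_le_of_ne {ι : Type*} {m : ι →₀ ℕ} {i j : ι}
    (hij : i ≠ j) (hi : 1 ≤ m i) (hj : 1 ≤ m j) : single i 1 + single j 1 ≤ m :=
  add_le_of_le_tsub_right_of_le (single_le_iff.2 hj) (single_le_iff.2 (by simp [hij, hi]))

theorem Finsupp.single_add_single_self_le {ι : Type*} {m : ι →₀ ℕ} {i : ι}
    (hi : 2 ≤ m i) : single i 1 + single i 1 ≤ m := by
  rw [← single_add]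
  exact single_le_iff.2 hi

noncomputable def toricExponent : Fin 6 → Fin 3 →₀ ℕ :=
  ![single 0 1 + single 2 1, single 0 1 + single 2 2, single 0 1,
    single 1 1 + single 2 1, single 1 1 + single 2 2, single 1 1]

noncomputable def toricExponentHom : (Fin 6 →₀ ℕ) →+ (Fin 3 →₀ ℕ) :=
  (Finsupp.linearCombination ℕ toricExponent).toAddMonoidHom

theorem toricExponentHom_apply (m : Fin 6 →₀ ℕ) :
    toricExponentHom m = single 0 (m 0 + m 1 + m 2) + single 1 (m 3 + m 4 + m 5) +
      single 2 (m 0 + m 1 * 2 + m 3 + m 4 * 2) := by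
  ext k
  fin_cases k <;>
    simp [toricExponentHom, Finsupp.linearCombination_apply, Finsupp.sum_fintype,
      Fin.sum_univ_six, toricExponent]

def IsStandard (m : Fin 6 →₀ ℕ) : Prop :=
  m 0 + m 3 ≤ 1 ∧ (m 0 = 0 ∨ m 4 = 0 ∧ m 5 = 0) ∧ (m 2 = 0 ∨ m 4 = 0)

theorem toricExponentHom_injOn : Set.InjOn toricExponentHom {m | IsStandard m} := by
  intro m hm m' hm' h
  have h0 : m 0 + m 1 + m 2 = m' 0 + m' 1 + m' 2 := by
    simpa [toricExponentHom_apply] using DFunLike.congr_fun h 0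
  have h1 : m 3 + m 4 + m 5 = m' 3 + m' 4 + m' 5 := by
    simpa [toricExponentHom_apply] using DFunLike.congr_fun h 1
  have h2 : m 0 + m 1 * 2 + m 3 + m 4 * 2 = m' 0 + m' 1 * 2 + m' 3 + m' 4 * 2 := by
    simpa [toricExponentHom_apply] using DFunLike.congr_fun h 2
  simp only [Set.mem_ofPred_eq, IsStandard] at hm hm'
  ext i
  fin_cases i <;> dsimp only [Fin.isValue, Fin.zero_eta, Fin.mk_one, Fin.reduceFinMk] <;> omega

section

variable (F : Type*) [CommRing F]

theorem toricImages_eq_monomial (i : Fin 6) :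
    toricImages F i = monomial (toricExponent i) 1 := by
  fin_cases i <;> simp [toricImages, toricExponent, X, monomial_mul, monomial_pow]

theorem aeval_toricImages_eq_mapDomainAlgHom :
    aeval (toricImages F) = AddMonoidAlgebra.mapDomainAlgHom F F toricExponentHom := by
  refine MvPolynomial.algHom_ext fun i => ?_
  rw [aeval_X, toricImages_eq_monomial, X, ← single_eq_monomial, ← single_eq_monomial,
    AddMonoidAlgebra.mapDomainAlgHom_apply, AddMonoidAlgebra.mapDomain_single]
  simp [toricExponentHom]

theorem minorsIdeal_le_ker : minorsIdeal F ≤ RingHom.ker (aeval (R := F) (toricImages F)) := by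
  simp only [minorsIdeal, Ideal.span_le, Set.insert_subset_iff, Set.singleton_subset_iff,
    SetLike.mem_coe, RingHom.mem_ker, map_sub, map_mul, map_pow, aeval_X, toricImages,
    Matrix.cons_val, sub_eq_zero]
  refine ⟨?_, ?_, ?_, ?_, ?_, ?_⟩ <;> ring

def reductionWeight (m : Fin 6 →₀ ℕ) : ℕ := 2 * m 0 + m 3 + m 4

open Finsupp in
theorem exists_reduction_of_not_isStandard {m : Fin 6 →₀ ℕ} (hm : ¬ IsStandard m) :
    ∃ i j k l : Fin 6, X i * X j - X k * X l ∈ minorsIdeal F ∧ single i 1 + single j 1 ≤ m ∧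
      reductionWeight (single k 1 + single l 1) < reductionWeight (single i 1 + single j 1) := by
  have gen : ∀ p ∈ ({X 0 ^ 2 - X 1 * X 2, X 0 * X 5 - X 2 * X 3, X 0 * X 3 - X 2 * X 4,
      X 0 * X 3 - X 1 * X 5, X 0 * X 4 - X 1 * X 3, X 3 ^ 2 - X 4 * X 5} : Set _),
      p ∈ minorsIdeal F := fun p hp => Ideal.subset_span hp
  have hCY : X 2 * X 4 - X 1 * X 5 ∈ minorsIdeal F := by
    convert sub_mem (gen (X 0 * X 3 - X 1 * X 5) (by simp))
      (gen (X 0 * X 3 - X 2 * X 4) (by simp)) using 1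
    ring
  have : (1 ≤ m 0 ∧ 1 ≤ m 3) ∨ 2 ≤ m 0 ∨ 2 ≤ m 3 ∨ (1 ≤ m 0 ∧ 1 ≤ m 4) ∨
      (1 ≤ m 0 ∧ 1 ≤ m 5) ∨ (1 ≤ m 2 ∧ 1 ≤ m 4) := by
    unfold IsStandard at hm
    omega
  rcases this with h | h | h | h | h | h
  · exact ⟨0, 3, 1, 5, gen _ (by simp), single_add_single_le_of_ne (by decide) h.1 h.2,
      by simp [reductionWeight]⟩
  · exact ⟨0, 0, 1, 2, gen _ (by simp [sq]), single_add_single_self_le h,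
      by simp [reductionWeight]⟩
  · exact ⟨3, 3, 4, 5, gen _ (by simp [sq]), single_add_single_self_le h,
      by simp [reductionWeight]⟩
  · exact ⟨0, 4, 1, 3, gen _ (by simp), single_add_single_le_of_ne (by decide) h.1 h.2,
      by simp [reductionWeight]⟩
  · exact ⟨0, 5, 2, 3, gen _ (by simp), single_add_single_le_of_ne (by decide) h.1 h.2,
      by simp [reductionWeight]⟩
  · exact ⟨2, 4, 1, 5, hCY, single_add_single_le_of_ne (by decide) h.1 h.2,
      by simp [reductionWeight]⟩

theorem monomial_mem_minorsIdeal_sup_restrictSupport (m : Fin 6 →₀ ℕ) :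
    monomial m (1 : F) ∈
      (minorsIdeal F).restrictScalars F ⊔ restrictSupport F {m | IsStandard m} := by
  induction h : reductionWeight m using Nat.strong_induction_on generalizing m with
  | _ w ih =>
  by_cases hm : IsStandard m
  · refine Submodule.mem_sup_right ?_
    rw [← single_eq_monomial]
    exact Finsupp.single_mem_supported F 1 hm
  · obtain ⟨i, j, k, l, hgen, hle, hlt⟩ := exists_reduction_of_not_isStandard F hm
    obtain ⟨n, rfl⟩ := exists_add_of_le hle
    rw [← sub_add_cancel (monomial _ (1 : F)) (monomial (single k 1 + single l 1 + n) 1)]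
    refine add_mem (Submodule.mem_sup_left (monomial_add_sub_monomial_add_mem hgen n))
      (ih _ ?_ _ rfl)
    simp only [reductionWeight, Finsupp.add_apply] at h hlt ⊢
    omega

theorem codisjoint_minorsIdeal_restrictSupport :
    Codisjoint ((minorsIdeal F).restrictScalars F) (restrictSupport F {m | IsStandard m}) := by
  rw [codisjoint_iff_le_sup, ← (basisMonomials (Fin 6) F).span_eq, Submodule.span_le]
  rintro _ ⟨m, rfl⟩
  rw [coe_basisMonomials]
  exact monomial_mem_minorsIdeal_sup_restrictSupport F m

theorem disjoint_restrictSupport_ker :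
    Disjoint (restrictSupport F {m | IsStandard m})
      ((RingHom.ker (aeval (R := F) (toricImages F))).restrictScalars F) := by
  rw [Submodule.disjoint_def]
  intro g hg hker
  have hmap : AddMonoidAlgebra.mapDomain toricExponentHom g =
      AddMonoidAlgebra.mapDomain toricExponentHom 0 := by
    rw [AddMonoidAlgebra.mapDomain_zero, ← AddMonoidAlgebra.mapDomainAlgHom_apply F,
      ← aeval_toricImages_eq_mapDomainAlgHom]
    exact hker
  exact AddMonoidAlgebra.coeff_injective <| Finsupp.mapDomain_injOn _ toricExponentHom_injOn hg
    (zero_mem (restrictSupport F _)) (congrArg AddMonoidAlgebra.coeff hmap)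

theorem ker_aeval_toricImages : RingHom.ker (aeval (R := F) (toricImages F)) = minorsIdeal F :=
  Submodule.restrictScalars_injective F _ _ <| Eq.symm <|
    (le_iff_eq_of_codisjoint_of_disjoint (codisjoint_minorsIdeal_restrictSupport F)
      (disjoint_restrictSupport_ker F)).1 (Submodule.restrictScalars_mono F (minorsIdeal_le_ker F))

theorem range_aeval_toricImages :
    (aeval (R := F) (toricImages F)).range =
      Algebra.adjoin F {X 0, X 0 * X 2, X 0 * X 2 ^ 2, X 1, X 1 * X 2, X 1 * X 2 ^ 2} := by
  rw [← Algebra.adjoin_range_eq_range_aeval]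
  congr 1
  ext p
  simp only [toricImages, Matrix.range_cons, Matrix.range_empty, Set.union_empty,
    Set.mem_union, Set.mem_singleton_iff, Set.mem_insert_iff]
  tauto

end

theorem kernel_of_toric_param_eq_minors_general
    (F : Type*) [Field F] :
    RingHom.ker (MvPolynomial.aeval (R := F) (toricImages F)) = minorsIdeal F ∧
    (MvPolynomial.aeval (R := F) (toricImages F)).range =
      Algebra.adjoin F {X 0, X 0 * X 2, X 0 * X 2 ^ 2, X 1, X 1 * X 2, X 1 * X 2 ^ 2} ∧
    Nonempty ((MvPolynomial (Fin 6) F ⧸ minorsIdeal F) ≃ₐ[F]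
      Algebra.adjoin F
        {X 0, X 0 * X 2, X 0 * X 2 ^ 2, X 1, (X 1 * X 2 : MvPolynomial (Fin 3) F),
         X 1 * X 2 ^ 2}) :=
  ⟨ker_aeval_toricImages F, range_aeval_toricImages F,
    ⟨(Ideal.quotientEquivAlgOfEq F (ker_aeval_toricImages F).symm).trans <|
      (Ideal.quotientKerEquivRange _).trans
        (Subalgebra.equivOfEq _ _ (range_aeval_toricImages F))⟩⟩

/-- The `F`-algebra map `F[A,B,C,X,Y,Z] → F[x,y,z]` determined by `A ↦ xz`, `B ↦ xz²`,
`C ↦ x`, `X ↦ yz`, `Y ↦ yz²`, `Z ↦ y` has kernel exactly the ideal of 2×2 minors `ℐ̄`, its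
range is the `F`-subalgebra generated by `x, xz, xz², y, yz, yz²`, and hence it induces an
`F`-algebra isomorphism `𝒮 = F[A,B,C,X,Y,Z]/ℐ̄ ≃ F[x, xz, xz², y, yz, yz²]`. -/
theorem kernel_of_toric_param_eq_minors (ℓ : ℕ) (hℓ : ℓ.Prime) (hℓ2 : 2 < ℓ)
    (F : Type*) [Field F] [Fintype F] [CharP F ℓ] :
    RingHom.ker (MvPolynomial.aeval (R := F) (toricImages F)) = minorsIdeal F ∧
    (MvPolynomial.aeval (R := F) (toricImages F)).range =
      Algebra.adjoin F {X 0, X 0 * X 2, X 0 * X 2 ^ 2, X 1, X 1 * X 2, X 1 * X 2 ^ 2} ∧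
    Nonempty ((MvPolynomial (Fin 6) F ⧸ minorsIdeal F) ≃ₐ[F]
      Algebra.adjoin F
        {X 0, X 0 * X 2, X 0 * X 2 ^ 2, X 1, (X 1 * X 2 : MvPolynomial (Fin 3) F),
         X 1 * X 2 ^ 2}) :=
  kernel_of_toric_param_eq_minors_general F
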